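/- Let X be a countable set and m : X → ℝ with m(x) > 0 for all x and finite total mass m(X). Let S > 0, α ≥ 0, o ∈ X, k ≥ 1, and let φ_1, …, φ_k : X → ℝ be orthonormal in ℓ²(X,m). Let λ_1 ≤ λ_2 ≤ … ≤ λ_k be real numbers with λ_1 ≥ 0 such that for every choice of reals β_1, …, β_k, the function φ = ∑_{j=1}^k β_j φ_j satisfies ‖φ‖_∞² ≤ S(∑_{j=1}^k λ_j β_j² + α φ(o)²). Then for every x ∈ X one has the pointwise Bessel-type bound ∑_{j=1}^k φ_j(x)² ≤ S(λ_k + α/m(o)). (Intermediate claim in the proof of Theorem 'spectral_bound_lin'.) -/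

import Mathlib

/-!
Test the Sobolev-type inequality with the coefficients `β j = φ j x`. The left side becomes
`T ^ 2` with `T = ∑ j, φ j x ^ 2`; by monotonicity of `lam` the spectral term is at most
`lam_k * T`, and since `y ↦ ∑ j, β j * φ j y` has squared `ℓ²(m)`-norm `∑ j, β j ^ 2 = T`,
its value at `o` satisfies `φ(o) ^ 2 * m o ≤ T`. Hence `T ^ 2 ≤ S (lam_k + α / m o) T`.
-/

open Finset

section Orthonormal

variable {X ι : Type*} [Fintype ι] [DecidableEq ι] {m : X → ℝ} {φ : ι → X → ℝ}

theorem hasSum_sq_sum_mul_of_orthonormal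
    (hφ : ∀ i j, HasSum (fun y => φ i y * φ j y * m y) (if i = j then 1 else 0))
    (β : ι → ℝ) :
    HasSum (fun y => (∑ j, β j * φ j y) ^ 2 * m y) (∑ j, β j ^ 2) := by
  have h := hasSum_sum fun i (_ : i ∈ univ) =>
    hasSum_sum fun j (_ : j ∈ univ) => (hφ i j).mul_left (β i * β j)
  have hexpand : ∀ y, (∑ j, β j * φ j y) ^ 2 * m y =
      ∑ i, ∑ j, β i * β j * (φ i y * φ j y * m y) := fun y => by
    simp only [sq, sum_mul, mul_sum]
    exact sum_congr rfl fun i _ => sum_congr rfl fun j _ => by ring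
  have hdiag : ∑ i, ∑ j, β i * β j * (if i = j then 1 else 0) = ∑ j, β j ^ 2 := by
    simp [sq]
  simpa only [← hexpand, hdiag] using h

theorem sq_sum_mul_apply_mul_le_sum_sq (hm : ∀ y, 0 ≤ m y)
    (hφ : ∀ i j, HasSum (fun y => φ i y * φ j y * m y) (if i = j then 1 else 0))
    (β : ι → ℝ) (o : X) :
    (∑ j, β j * φ j o) ^ 2 * m o ≤ ∑ j, β j ^ 2 :=
  le_hasSum (hasSum_sq_sum_mul_of_orthonormal hφ β) o fun y _ =>
    mul_nonneg (sq_nonneg _) (hm y)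

end Orthonormal

theorem pointwise_bessel_bound_general
    {X : Type*} (m : X → ℝ)
    (hm_pos : ∀ x, 0 < m x)
    (S α : ℝ) (hS : 0 < S) (hα : 0 ≤ α)
    (o : X) (k : ℕ) (hk : 0 < k)
    (φ : Fin k → X → ℝ)
    (hφ_sum : ∀ i j, Summable (fun y => φ i y * φ j y * m y))
    (hφ_orth : ∀ i j, (∑' y, φ i y * φ j y * m y) = if i = j then (1 : ℝ) else 0)
    (lam : Fin k → ℝ) (hlam_mono : Monotone lam) (hlam_nonneg : 0 ≤ lam ⟨0, hk⟩)
    (hsobolev : ∀ β : Fin k → ℝ, ∀ y : X,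
      (∑ j, β j * φ j y) ^ 2 ≤
        S * ((∑ j, lam j * β j ^ 2) + α * (∑ j, β j * φ j o) ^ 2)) :
    ∀ x : X, (∑ j, φ j x ^ 2) ≤
      S * (lam ⟨k - 1, Nat.sub_lt hk Nat.one_pos⟩ + α / m o) := by
  intro x
  set last : Fin k := ⟨k - 1, Nat.sub_lt hk Nat.one_pos⟩
  set T := ∑ j, φ j x ^ 2
  have horth : ∀ i j, HasSum (fun y => φ i y * φ j y * m y) (if i = j then 1 else 0) :=
    fun i j => hφ_orth i j ▸ (hφ_sum i j).hasSum
  have hlam_le : ∀ j, lam j ≤ lam last := fun j => hlam_mono (Fin.mk_le_mk.mpr (by omega))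
  have hval : ∑ j, φ j x * φ j x = T := by simp only [T, sq]
  have hkinetic : ∑ j, lam j * φ j x ^ 2 ≤ lam last * T := by
    rw [mul_sum]
    exact sum_le_sum fun j _ => mul_le_mul_of_nonneg_right (hlam_le j) (sq_nonneg _)
  have hpoint : (∑ j, φ j x * φ j o) ^ 2 ≤ T / m o := by
    rw [le_div_iff₀ (hm_pos o)]
    exact sq_sum_mul_apply_mul_le_sum_sq (fun y => (hm_pos y).le) horth (φ · x) o
  have hquad : T ^ 2 ≤ S * (lam last + α / m o) * T := calc
    T ^ 2 = (∑ j, φ j x * φ j x) ^ 2 := by rw [hval]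
    _ ≤ S * (∑ j, lam j * φ j x ^ 2 + α * (∑ j, φ j x * φ j o) ^ 2) := hsobolev (φ · x) x
    _ ≤ S * (lam last * T + α * (T / m o)) := by gcongr
    _ = S * (lam last + α / m o) * T := by ring
  have hbound_nonneg : 0 ≤ S * (lam last + α / m o) := by
    have := hlam_nonneg.trans (hlam_le ⟨0, hk⟩)
    have := hm_pos o
    positivity
  nlinarith [show 0 ≤ T by positivity]

/-- pointwise Bessel-type bound: intermediate claim in the proof of
Theorem `spectral_bound_lin`.
Under the same hypotheses as in Statement 1, for every `x ∈ X` one has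
`∑_{j=1}^k φⱼ(x)² ≤ S (λ_k + α/m(o))`. -/
theorem pointwise_bessel_bound
    {X : Type*} [Countable X] (m : X → ℝ)
    (hm_pos : ∀ x, 0 < m x) (hm_fin : Summable m)
    (S α : ℝ) (hS : 0 < S) (hα : 0 ≤ α)
    (o : X) (k : ℕ) (hk : 0 < k)
    (φ : Fin k → X → ℝ)
    (hφ_sum : ∀ i j, Summable (fun y => φ i y * φ j y * m y))
    (hφ_orth : ∀ i j, (∑' y, φ i y * φ j y * m y) = if i = j then (1 : ℝ) else 0)
    (lam : Fin k → ℝ) (hlam_mono : Monotone lam) (hlam_nonneg : 0 ≤ lam ⟨0, hk⟩)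
    (hsobolev : ∀ β : Fin k → ℝ, ∀ y : X,
      (∑ j, β j * φ j y) ^ 2 ≤
        S * ((∑ j, lam j * β j ^ 2) + α * (∑ j, β j * φ j o) ^ 2)) :
    ∀ x : X, (∑ j, φ j x ^ 2) ≤
      S * (lam ⟨k - 1, Nat.sub_lt hk Nat.one_pos⟩ + α / m o) :=
  pointwise_bessel_bound_general m hm_pos S α hS hα o k hk φ hφ_sum hφ_orth lam hlam_mono
    hlam_nonneg hsobolev
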